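/- arXiv:0808.2847 — 2 statements merged into one kernel-verified Lean document; each statement's English description precedes it below -/
import Mathlib

section
/- Let a, c : ℝ⁴ → ℝ be smooth. There exists a smooth function f : ℝ⁴ → ℝ satisfying, at every point of ℝ⁴, the three equations ∂_v f = 0, ∂_u f = 0, and (a/2)·∂_u f + (c/2)·∂_v f − ∂_x f = (1/2)·∂_v c, if and only if ∂_u ∂_v c = 0 and ∂_v ∂_v c = 0 at every point of ℝ⁴. -/
/-- Coordinates on `ℝ⁴ = Fin 4 → ℝ` are `(u, v, x, y)`, indexed by `0, 1, 2, 3`.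
`pd i f` is the partial derivative of `f` in the `i`-th coordinate direction. -/
noncomputable def pd (i : Fin 4) (f : (Fin 4 → ℝ) → ℝ) (z : Fin 4 → ℝ) : ℝ :=
  fderiv ℝ f z (Pi.single i 1)

/-!
If `f` solves the system, the first two equations turn the third into `∂_v c = -2 ∂_x f`; by
symmetry of second derivatives `∂_u ∂_v c = -2 ∂_x ∂_u f = 0` and likewise `∂_v ∂_v c = 0`.

Conversely, if `∂_u ∂_v c = ∂_v ∂_v c = 0` then `∂_v c` does not depend on `u, v`, and
`f(u, v, x, y) = -½ ∫₀ˣ ∂_v c(u, v, t, y) dt` solves the system: it inherits the independence of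
`u, v`, and `∂_x f = -½ ∂_v c` by the fundamental theorem of calculus. It is smooth because
`∫₀ˣ h(t) dt = x ∫₀¹ h(x s) ds` is an integral over a fixed interval, which may be differentiated
under the integral sign as often as we like.
-/

open Set Function

universe u

section ParametricIntegral

variable {P E : Type u} [NormedAddCommGroup P] [NormedSpace ℝ P]
  [NormedAddCommGroup E] [NormedSpace ℝ E]

noncomputable def fderivParam (K : P → ℝ → E) (p : P) (t : ℝ) : P →L[ℝ] E :=
  (fderiv ℝ (uncurry K) (p, t)).comp (ContinuousLinearMap.inl ℝ P ℝ)

theorem contDiff_uncurry_fderivParam {K : P → ℝ → E} {n : ℕ}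
    (hK : ContDiff ℝ (n + 1) (uncurry K)) : ContDiff ℝ n (uncurry (fderivParam K)) :=
  (hK.fderiv_right le_rfl).clm_comp contDiff_const

theorem hasFDerivAt_fderivParam {K : P → ℝ → E} (hK : ContDiff ℝ 1 (uncurry K)) (p : P) (t : ℝ) :
    HasFDerivAt (fun q => K q t) (fderivParam K p t) p := by
  have hd : HasFDerivAt (uncurry K) (fderiv ℝ (uncurry K) (p, t)) (p, t) :=
    (hK.differentiable one_ne_zero (p, t)).hasFDerivAt
  exact hd.comp p (hasFDerivAt_prodMk_left (𝕜 := ℝ) p t)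

variable [ProperSpace P]

theorem hasFDerivAt_intervalIntegral_of_contDiff {K : P → ℝ → E}
    (hK : ContDiff ℝ 1 (uncurry K)) (a b : ℝ) (p₀ : P) :
    HasFDerivAt (fun p => ∫ t in a..b, K p t) (∫ t in a..b, fderivParam K p₀ t) p₀ := by
  have hK' : Continuous (uncurry (fderivParam K)) :=
    (contDiff_uncurry_fderivParam (n := 0) (by simpa using hK)).continuous
  obtain ⟨M, hM⟩ := (isCompact_closedBall p₀ 1 |>.prod isCompact_uIcc)
    |>.exists_bound_of_continuousOn hK'.continuousOn
  refine intervalIntegral.hasFDerivAt_integral_of_dominated_of_fderiv_le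
    (bound := fun _ => M) (Metric.ball_mem_nhds p₀ zero_lt_one)
    (Filter.Eventually.of_forall fun p => ?_) ?_ ?_ ?_ intervalIntegrable_const
    (Filter.Eventually.of_forall fun t _ p _ => hasFDerivAt_fderivParam hK p t)
  · exact (hK.continuous.uncurry_left p).aestronglyMeasurable
  · exact (hK.continuous.uncurry_left p₀).intervalIntegrable a b
  · exact (hK'.uncurry_left p₀).aestronglyMeasurable
  · exact Filter.Eventually.of_forall fun t ht p hp =>
      hM (p, t) ⟨Metric.ball_subset_closedBall hp, uIoc_subset_uIcc ht⟩

theorem contDiff_intervalIntegral (n : ℕ) {K : P → ℝ → E} (hK : ContDiff ℝ n (uncurry K))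
    (a b : ℝ) : ContDiff ℝ n (fun p => ∫ t in a..b, K p t) := by
  induction n generalizing E with
  | zero =>
    exact contDiff_zero.mpr
      (intervalIntegral.continuous_parametric_intervalIntegral_of_continuous' hK.continuous a b)
  | succ n ih =>
    have hK1 : ContDiff ℝ 1 (uncurry K) := hK.of_le (by exact_mod_cast Nat.le_add_left 1 n)
    have hderiv :
        fderiv ℝ (fun p => ∫ t in a..b, K p t) = fun p => ∫ t in a..b, fderivParam K p t :=
      funext fun p => (hasFDerivAt_intervalIntegral_of_contDiff hK1 a b p).fderiv
    rw [Nat.cast_add, Nat.cast_one, contDiff_succ_iff_fderiv, hderiv]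
    refine ⟨fun p => (hasFDerivAt_intervalIntegral_of_contDiff hK1 a b p).differentiableAt,
      by simp, ih (contDiff_uncurry_fderivParam hK)⟩

theorem contDiff_primitive {n : ℕ∞} {K : P → ℝ → E} (hK : ContDiff ℝ n (uncurry K)) :
    ContDiff ℝ n (fun q : P × ℝ => ∫ t in (0:ℝ)..q.2, K q.1 t) := by
  refine contDiff_iff_forall_nat_le.mpr fun m hm => ?_
  have hscaled : ContDiff ℝ m (fun q : P × ℝ => ∫ s in (0:ℝ)..1, K q.1 (q.2 * s)) :=
    contDiff_intervalIntegral m (K := fun (q : P × ℝ) s => K q.1 (q.2 * s))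
      ((contDiff_iff_forall_nat_le.mp hK m hm).comp
        (f := fun x : (P × ℝ) × ℝ => (x.1.1, x.1.2 * x.2)) (by fun_prop)) 0 1
  convert contDiff_snd.smul hscaled using 1
  funext q
  simp

end ParametricIntegral

section PartialDerivative

variable {f : (Fin 4 → ℝ) → ℝ}

theorem ContDiff.pd {m n : WithTop ℕ∞} (hf : ContDiff ℝ n f) (hmn : m + 1 ≤ n) (i : Fin 4) :
    ContDiff ℝ m (pd i f) :=
  (hf.fderiv_right hmn).clm_apply contDiff_const

theorem pd_const_smul (c : ℝ) (i : Fin 4) : pd i (c • f) = c • pd i f := by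
  funext z
  simp [pd, fderiv_const_smul_field]

theorem pd_pd_eq_fderiv_fderiv {z : Fin 4 → ℝ} (hf : DifferentiableAt ℝ (fderiv ℝ f) z)
    (i j : Fin 4) : pd i (pd j f) z = fderiv ℝ (fderiv ℝ f) z (Pi.single i 1) (Pi.single j 1) := by
  change fderiv ℝ (fun w => fderiv ℝ f w (Pi.single j 1)) z (Pi.single i 1) = _
  simp [fderiv_clm_apply hf (differentiableAt_const _)]

theorem pd_comm (hf : ContDiff ℝ 2 f) (i j : Fin 4) (z : Fin 4 → ℝ) :
    pd i (pd j f) z = pd j (pd i f) z := by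
  have hdiff : DifferentiableAt ℝ (fderiv ℝ f) z :=
    (hf.fderiv_right (m := 1) le_rfl).differentiable one_ne_zero z
  rw [pd_pd_eq_fderiv_fderiv hdiff, pd_pd_eq_fderiv_fderiv hdiff,
    (hf.contDiffAt.isSymmSndFDerivAt (by simp)).eq]

theorem pd_pd_eq_zero_of_pd_eq_zero (hf : ContDiff ℝ 2 f) {i : Fin 4} (h : ∀ w, pd i f w = 0)
    (j : Fin 4) (z : Fin 4 → ℝ) : pd i (pd j f) z = 0 := by
  rw [pd_comm hf, show pd i f = 0 from funext h]
  simp [pd]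

theorem hasDerivAt_apply_update {z : Fin 4 → ℝ} {i : Fin 4} {t : ℝ}
    (hf : DifferentiableAt ℝ f (update z i t)) :
    HasDerivAt (fun s => f (update z i s)) (pd i f (update z i t)) t :=
  hf.hasFDerivAt.comp_hasDerivAt t (hasDerivAt_update z i t)

theorem pd_eq_deriv_update {z : Fin 4 → ℝ} (hf : DifferentiableAt ℝ f z) (i : Fin 4) :
    pd i f z = deriv (fun s => f (update z i s)) (z i) := by
  rw [← update_eq_self i z] at hf
  have h := (hasDerivAt_apply_update hf).deriv
  rw [update_eq_self] at h
  exact h.symm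

theorem apply_update_eq_of_pd_eq_zero (hf : Differentiable ℝ f) {i : Fin 4}
    (h : ∀ w, pd i f w = 0) (z : Fin 4 → ℝ) (s : ℝ) : f (update z i s) = f z := by
  have hconst := is_const_of_deriv_eq_zero (f := fun s => f (update z i s))
    (fun t => (hasDerivAt_apply_update (hf _)).differentiableAt)
    (fun t => by rw [(hasDerivAt_apply_update (hf _)).deriv, h]) s (z i)
  simpa using hconst

theorem pd_eq_zero_of_apply_update_eq {z : Fin 4 → ℝ} (hf : DifferentiableAt ℝ f z) {i : Fin 4}
    (h : ∀ s, f (update z i s) = f z) : pd i f z = 0 := by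
  simp [pd_eq_deriv_update hf, h]

end PartialDerivative

noncomputable def linePrimitive (i : Fin 4) (g : (Fin 4 → ℝ) → ℝ) (z : Fin 4 → ℝ) : ℝ :=
  ∫ t in (0:ℝ)..z i, g (update z i t)

section LinePrimitive

variable {g : (Fin 4 → ℝ) → ℝ}

theorem ContDiff.linePrimitive {n : ℕ∞} (hg : ContDiff ℝ n g) (i : Fin 4) :
    ContDiff ℝ n (linePrimitive i g) := by
  have hK : ContDiff ℝ n (uncurry fun z t => g (update z i t)) :=
    hg.comp (contDiff_pi.mpr fun j => by
      by_cases hj : j = i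
      · subst hj; simpa using contDiff_snd
      · simp only [update_of_ne hj]
        fun_prop)
  exact (contDiff_primitive hK).comp (contDiff_id.prodMk (contDiff_apply ℝ ℝ i))

theorem linePrimitive_update_self (i : Fin 4) (z : Fin 4 → ℝ) (s : ℝ) :
    linePrimitive i g (update z i s) = ∫ t in (0:ℝ)..s, g (update z i t) := by
  simp [linePrimitive]

theorem linePrimitive_update_of_ne {i j : Fin 4} (hji : j ≠ i)
    (hg : ∀ w s, g (update w j s) = g w) (z : Fin 4 → ℝ) (s : ℝ) :
    linePrimitive i g (update z j s) = linePrimitive i g z := by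
  simp only [linePrimitive, update_of_ne hji.symm, update_comm hji, hg]

theorem pd_linePrimitive_of_ne {i j : Fin 4} (hji : j ≠ i) (hg : ContDiff ℝ 1 g)
    (hjg : ∀ w, pd j g w = 0) (z : Fin 4 → ℝ) : pd j (linePrimitive i g) z = 0 :=
  pd_eq_zero_of_apply_update_eq ((hg.linePrimitive i).differentiable one_ne_zero z)
    (linePrimitive_update_of_ne hji
      (apply_update_eq_of_pd_eq_zero (hg.differentiable one_ne_zero) hjg) z)

theorem pd_linePrimitive_self (hg : ContDiff ℝ 1 g) (i : Fin 4) (z : Fin 4 → ℝ) :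
    pd i (linePrimitive i g) z = g z := by
  rw [pd_eq_deriv_update ((hg.linePrimitive i).differentiable one_ne_zero z)]
  have hcont : Continuous fun t => g (update z i t) := (hg.comp (contDiff_update 1 z i)).continuous
  simp only [linePrimitive_update_self]
  rw [hcont.deriv_integral, update_eq_self]

end LinePrimitive

theorem conformal_rescaling_system_solvable_iff_general
    (a c : (Fin 4 → ℝ) → ℝ)
    (hc : ContDiff ℝ (⊤ : ℕ∞) c) :
    (∃ f : (Fin 4 → ℝ) → ℝ, ContDiff ℝ (⊤ : ℕ∞) f ∧
      ∀ z : Fin 4 → ℝ,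
        pd 1 f z = 0 ∧
        pd 0 f z = 0 ∧
        (a z / 2) * pd 0 f z + (c z / 2) * pd 1 f z - pd 2 f z
          = (1 / 2) * pd 1 c z) ↔
    (∀ z : Fin 4 → ℝ, pd 0 (pd 1 c) z = 0 ∧ pd 1 (pd 1 c) z = 0) := by
  constructor
  · rintro ⟨f, hf, h⟩ z
    have hcv_eq : pd 1 c = (-2 : ℝ) • pd 2 f := by
      funext w
      obtain ⟨hv, hu, hx⟩ := h w
      simp only [hv, hu, mul_zero, zero_add, zero_sub] at hx
      simp only [Pi.smul_apply, smul_eq_mul]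
      linarith
    have hf2 : ContDiff ℝ 2 f := hf.of_le (by norm_cast)
    simp only [hcv_eq, pd_const_smul, Pi.smul_apply, smul_eq_mul, mul_eq_zero]
    exact ⟨.inr (pd_pd_eq_zero_of_pd_eq_zero hf2 (fun w => (h w).2.1) 2 z),
      .inr (pd_pd_eq_zero_of_pd_eq_zero hf2 (fun w => (h w).1) 2 z)⟩
  · intro H
    have hcv : ContDiff ℝ (⊤ : ℕ∞) (pd 1 c) := hc.pd (by simp) 1
    have hcv1 : ContDiff ℝ 1 (pd 1 c) := hcv.of_le (by norm_cast)
    refine ⟨(-(1/2) : ℝ) • linePrimitive 2 (pd 1 c), contDiff_const.smul (hcv.linePrimitive 2),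
      fun z => ?_⟩
    have hu := pd_linePrimitive_of_ne (i := 2) (by decide) hcv1 (fun w => (H w).1) z
    have hv := pd_linePrimitive_of_ne (i := 2) (by decide) hcv1 (fun w => (H w).2) z
    have hx := pd_linePrimitive_self hcv1 2 z
    simp only [pd_const_smul, Pi.smul_apply, smul_eq_mul, hu, hv, hx]
    norm_num

/-- For smooth `a, c : ℝ⁴ → ℝ`, there exists a smooth `f : ℝ⁴ → ℝ` with
`∂_v f = 0`, `∂_u f = 0` and `(a/2)∂_u f + (c/2)∂_v f − ∂_x f = (1/2)∂_v c`
everywhere, if and only if `∂_u ∂_v c = 0` and `∂_v ∂_v c = 0` everywhere. -/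
theorem conformal_rescaling_system_solvable_iff
    (a c : (Fin 4 → ℝ) → ℝ)
    (ha : ContDiff ℝ (⊤ : ℕ∞) a) (hc : ContDiff ℝ (⊤ : ℕ∞) c) :
    (∃ f : (Fin 4 → ℝ) → ℝ, ContDiff ℝ (⊤ : ℕ∞) f ∧
      ∀ z : Fin 4 → ℝ,
        pd 1 f z = 0 ∧
        pd 0 f z = 0 ∧
        (a z / 2) * pd 0 f z + (c z / 2) * pd 1 f z - pd 2 f z
          = (1 / 2) * pd 1 c z) ↔
    (∀ z : Fin 4 → ℝ, pd 0 (pd 1 c) z = 0 ∧ pd 1 (pd 1 c) z = 0) :=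
  conformal_rescaling_system_solvable_iff_general a c hc
end

section
/- Let F : ℝ² → ℝ be smooth, and write F_x, F_y for its two partial derivatives. On the open set Ω = {(u,v,x,y) ∈ ℝ⁴ : v ≠ 0} define a(u,v,x,y) = exp(4F(x,y))·u⁴/(3v²) + 4u·F_x(x,y), b(u,v,x,y) = exp(4F(x,y))·u² + 2v·F_y(x,y), c(u,v,x,y) = 2·exp(4F(x,y))·u³/(3v) + 2u·F_y(x,y), and χ(u,v,x,y) = 1/v. Then at every point of Ω: −a·∂_u∂_u χ − 2c·∂_u∂_v χ − b·∂_v∂_v χ + 2·∂_u∂_x χ + 2·∂_v∂_y χ − (∂_u a + ∂_v c)·∂_u χ − (∂_v b + ∂_u c)·∂_v χ = 0. -/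
/-- Partial derivative on `ℝ² = Fin 2 → ℝ`, coordinates `(x, y)` indexed by `0, 1`. -/
noncomputable def pd2 (i : Fin 2) (f : (Fin 2 → ℝ) → ℝ) (p : Fin 2 → ℝ) : ℝ :=
  fderiv ℝ f p (Pi.single i 1)

/-!
Since `χ = v⁻¹` depends on `v` alone, `∂_u χ = 0` and the only surviving second derivative
is `∂_v∂_v χ = 2 v⁻³`; in particular `a` drops out. What remains is
`-2 b v⁻³ + (∂_v b + ∂_u c) v⁻²`, and with `∂_v b = 2 F_y`, `∂_u c = 2 e^{4F} u² / v + 2 F_y`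
the two terms are `∓(2 e^{4F} u² v⁻³ + 4 F_y v⁻²)`.
-/

open Function

section PiReal

variable {ι : Type*} [Fintype ι] [DecidableEq ι]

theorem fderiv_apply_single_eq_deriv_update {f : (ι → ℝ) → ℝ} {z : ι → ℝ}
    (hf : DifferentiableAt ℝ f z) (i : ι) :
    fderiv ℝ f z (Pi.single i 1) = deriv (fun t => f (update z i t)) (z i) := by
  rw [← update_eq_self i z] at hf
  have h := (hf.hasFDerivAt.comp_hasDerivAt (z i) (hasDerivAt_update z i (z i))).deriv
  rwa [update_eq_self, eq_comm] at h

theorem fderiv_comp_apply_apply_single (φ : ℝ → ℝ) (i j : ι) (z : ι → ℝ) :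
    fderiv ℝ (fun w => φ (w j)) z (Pi.single i 1) = if i = j then deriv φ (z j) else 0 := by
  by_cases hφ : DifferentiableAt ℝ φ (z j)
  · have h : HasFDerivAt (fun w : ι → ℝ => φ (w j))
        (deriv φ (z j) • ContinuousLinearMap.proj j) z :=
      hφ.hasDerivAt.comp_hasFDerivAt z
        (ContinuousLinearMap.proj (R := ℝ) (φ := fun _ : ι => ℝ) j).hasFDerivAt
    rw [h.fderiv]
    simp [Pi.single_apply, eq_comm]
  · -- restricting to the line through `z` in direction `j` would make `φ` differentiable
    have hnot : ¬ DifferentiableAt ℝ (fun w : ι → ℝ => φ (w j)) z := fun h => by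
      rw [← update_eq_self j z] at h
      have hline := h.comp (z j) (hasDerivAt_update z j (z j)).differentiableAt
      exact hφ (by simpa [comp_def] using hline)
    rw [fderiv_zero_of_not_differentiableAt hnot, deriv_zero_of_not_differentiableAt hφ]
    simp

end PiReal

@[fun_prop]
theorem Differentiable.vecCons {E : Type*} [NormedAddCommGroup E] [NormedSpace ℝ E] {n : ℕ}
    {f : E → ℝ} {g : E → Fin n → ℝ} (hf : Differentiable ℝ f) (hg : Differentiable ℝ g) :
    Differentiable ℝ fun w => Matrix.vecCons (f w) (g w) :=
  differentiable_pi.2 fun k =>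
    Fin.cases (by simpa) (fun k => by simpa using differentiable_pi.1 hg k) k

theorem ContDiff.differentiable_pd2 {F : (Fin 2 → ℝ) → ℝ} (hF : ContDiff ℝ 2 F) (i : Fin 2) :
    Differentiable ℝ (pd2 i F) :=
  ((hF.fderiv_right (m := 1) (by norm_num)).clm_apply contDiff_const).differentiable one_ne_zero

theorem pd_const_mul_zpow (c : ℝ) (m : ℤ) (i j : Fin 4) :
    pd i (fun w => c * w j ^ m) = fun w => if i = j then c * m * w j ^ (m - 1) else 0 := by
  funext w
  rw [pd, fderiv_comp_apply_apply_single (fun t => c * t ^ m), deriv_const_mul_field',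
    deriv_zpow', mul_assoc]

section WalkerComponents

variable {E G : (Fin 2 → ℝ) → ℝ} (hE : Differentiable ℝ E) (hG : Differentiable ℝ G)
include hE hG

theorem pd_one_eq_of_eq_mul_sq_add {b : (Fin 4 → ℝ) → ℝ}
    (hb : ∀ w, b w = E ![w 2, w 3] * w 0 ^ 2 + 2 * w 1 * G ![w 2, w 3]) (z : Fin 4 → ℝ) :
    pd 1 b z = 2 * G ![z 2, z 3] := by
  rw [pd, fderiv_apply_single_eq_deriv_update (by rw [funext hb]; fun_prop)]
  simp [hb]

theorem pd_zero_eq_of_eq_mul_cube_div_add {c : (Fin 4 → ℝ) → ℝ}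
    (hc : ∀ w, c w = 2 * E ![w 2, w 3] * w 0 ^ 3 / (3 * w 1) + 2 * w 0 * G ![w 2, w 3])
    {z : Fin 4 → ℝ} (hz : z 1 ≠ 0) :
    pd 0 c z = 2 * E ![z 2, z 3] * z 0 ^ 2 / z 1 + 2 * G ![z 2, z 3] := by
  have hc_diff : DifferentiableAt ℝ c z := by rw [funext hc]; fun_prop (disch := simp [hz])
  rw [pd, fderiv_apply_single_eq_deriv_update hc_diff]
  have hderiv : HasDerivAt
      (fun t => 2 * E ![z 2, z 3] * t ^ 3 / (3 * z 1) + 2 * t * G ![z 2, z 3])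
      (2 * E ![z 2, z 3] * (3 * z 0 ^ 2) / (3 * z 1) + 2 * 1 * G ![z 2, z 3]) (z 0) :=
    (((hasDerivAt_pow 3 (z 0)).const_mul _).div_const _).add
      (((hasDerivAt_id (z 0)).const_mul 2).mul_const _)
  simp only [hc, update_self, ne_eq, Fin.reduceEq, not_false_eq_true, update_of_ne]
  rw [hderiv.deriv]
  field_simp

end WalkerComponents

theorem box_of_conformal_factor_vanishes_general
    (F : (Fin 2 → ℝ) → ℝ) (hF : ContDiff ℝ (⊤ : ℕ∞) F)
    (a b c χ : (Fin 4 → ℝ) → ℝ)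
    (hb : ∀ z : Fin 4 → ℝ, b z =
      Real.exp (4 * F ![z 2, z 3]) * (z 0) ^ 2 + 2 * z 1 * pd2 1 F ![z 2, z 3])
    (hc : ∀ z : Fin 4 → ℝ, c z =
      2 * Real.exp (4 * F ![z 2, z 3]) * (z 0) ^ 3 / (3 * z 1)
        + 2 * z 0 * pd2 1 F ![z 2, z 3])
    (hχ : ∀ z : Fin 4 → ℝ, χ z = 1 / z 1) :
    ∀ z : Fin 4 → ℝ, z 1 ≠ 0 →
      -(a z) * pd 0 (pd 0 χ) z - 2 * c z * pd 0 (pd 1 χ) z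
        - b z * pd 1 (pd 1 χ) z
        + 2 * pd 0 (pd 2 χ) z + 2 * pd 1 (pd 3 χ) z
        - (pd 0 a z + pd 1 c z) * pd 0 χ z
        - (pd 1 b z + pd 0 c z) * pd 1 χ z = 0 := by
  intro z hz
  have hχ_zpow : χ = fun w => 1 * w 1 ^ (-1 : ℤ) := funext fun w => by simp [hχ]
  have hχ_v : pd 1 χ = fun w => -1 * w 1 ^ (-2 : ℤ) := by
    rw [hχ_zpow, pd_const_mul_zpow]; norm_num
  have hχ_other (i : Fin 4) (hi : i ≠ 1) : pd i χ = fun _ => 0 := by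
    rw [hχ_zpow, pd_const_mul_zpow]; simp [hi]
  have hχ_uv : pd 0 (pd 1 χ) z = 0 := by rw [hχ_v, pd_const_mul_zpow]; simp
  have hχ_vv : pd 1 (pd 1 χ) z = 2 * z 1 ^ (-3 : ℤ) := by
    rw [hχ_v, pd_const_mul_zpow]; norm_num
  have hE : Differentiable ℝ fun p => Real.exp (4 * F p) := by
    have := hF.differentiable (by simp); fun_prop
  have hFy : Differentiable ℝ (pd2 1 F) :=
    (hF.of_le (WithTop.coe_le_coe.2 le_top)).differentiable_pd2 1
  rw [hχ_other 0 (by decide), hχ_other 2 (by decide), hχ_other 3 (by decide), hχ_uv, hχ_vv,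
    hχ_v, pd_one_eq_of_eq_mul_sq_add hE hFy hb, pd_zero_eq_of_eq_mul_cube_div_add hE hFy hc hz,
    hb z]
  simp [pd]
  field_simp
  ring

/-- For the Walker metric components `a, b, c` of the Chudecki–Przanowski example
and the conformal factor `χ = 1/v`, the Walker wave operator `□χ` vanishes on
the set where `v ≠ 0`. -/
theorem box_of_conformal_factor_vanishes
    (F : (Fin 2 → ℝ) → ℝ) (hF : ContDiff ℝ (⊤ : ℕ∞) F)
    (a b c χ : (Fin 4 → ℝ) → ℝ)
    (ha : ∀ z : Fin 4 → ℝ, a z =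
      Real.exp (4 * F ![z 2, z 3]) * (z 0) ^ 4 / (3 * (z 1) ^ 2)
        + 4 * z 0 * pd2 0 F ![z 2, z 3])
    (hb : ∀ z : Fin 4 → ℝ, b z =
      Real.exp (4 * F ![z 2, z 3]) * (z 0) ^ 2 + 2 * z 1 * pd2 1 F ![z 2, z 3])
    (hc : ∀ z : Fin 4 → ℝ, c z =
      2 * Real.exp (4 * F ![z 2, z 3]) * (z 0) ^ 3 / (3 * z 1)
        + 2 * z 0 * pd2 1 F ![z 2, z 3])
    (hχ : ∀ z : Fin 4 → ℝ, χ z = 1 / z 1) :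
    ∀ z : Fin 4 → ℝ, z 1 ≠ 0 →
      -(a z) * pd 0 (pd 0 χ) z - 2 * c z * pd 0 (pd 1 χ) z
        - b z * pd 1 (pd 1 χ) z
        + 2 * pd 0 (pd 2 χ) z + 2 * pd 1 (pd 3 χ) z
        - (pd 0 a z + pd 1 c z) * pd 0 χ z
        - (pd 1 b z + pd 0 c z) * pd 1 χ z = 0 :=
  box_of_conformal_factor_vanishes_general F hF a b c χ hb hc hχ
end
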